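/- For a positive integer n, x^(n+1) = x holds for every x in ℤ/nℤ if and only if n is squarefree and p − 1 divides n for every prime p dividing n. -/

import Mathlib

/-!
Write `q` for a prime divisor of `n`. Since `ℤ/nℤ` surjects onto `𝔽_q`, the identity
`x ^ (n + 1) = x` descends to `𝔽_q`, where (the unit group being cyclic of order `q - 1`) it
holds exactly when `q - 1 ∣ n`. The identity also forces `ℤ/nℤ` to be reduced, i.e. `n` to be
squarefree. Conversely, for squarefree `n` an element of `ℤ/nℤ` vanishes as soon as all its
images in the fields `𝔽_q` do, and `x ^ (n + 1) - x` vanishes in each of them.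
-/

theorem isReduced_of_forall_pow_succ_eq_self {R : Type*} [MonoidWithZero R] {k : ℕ} (hk : 0 < k)
    (h : ∀ x : R, x ^ (k + 1) = x) : IsReduced R :=
  (isReduced_iff_pow_one_lt (k + 1) (by omega)).mpr fun x hx => (h x).symm.trans hx

theorem FiniteField.forall_pow_succ_eq_self_iff {K : Type*} [Field K] [Fintype K] (m : ℕ) :
    (∀ x : K, x ^ (m + 1) = x) ↔ Fintype.card K - 1 ∣ m := by
  rw [← FiniteField.forall_pow_eq_one_iff]
  constructor
  · intro h u
    apply Units.val_injective
    apply mul_right_cancel₀ u.ne_zero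
    rw [Units.val_pow_eq_pow_val, ← pow_succ, h, Units.val_one, one_mul]
  · intro h x
    rcases eq_or_ne x 0 with rfl | hx
    · exact zero_pow m.succ_ne_zero
    · have hxm := congrArg Units.val (h (Units.mk0 x hx))
      rw [Units.val_pow_eq_pow_val, Units.val_mk0, Units.val_one] at hxm
      rw [pow_succ, hxm, one_mul]

theorem ZMod.forall_pow_succ_eq_self_iff {p : ℕ} [Fact p.Prime] (m : ℕ) :
    (∀ x : ZMod p, x ^ (m + 1) = x) ↔ p - 1 ∣ m := by
  rw [FiniteField.forall_pow_succ_eq_self_iff, ZMod.card]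

theorem Squarefree.dvd_of_forall_prime_dvd {n m : ℕ} (hn : Squarefree n)
    (h : ∀ p : ℕ, p.Prime → p ∣ n → p ∣ m) : n ∣ m := by
  rw [← Nat.prod_primeFactors_of_squarefree hn]
  exact Finset.prod_primes_dvd m (fun p hp => (Nat.prime_of_mem_primeFactors hp).prime)
    fun p hp => h p (Nat.prime_of_mem_primeFactors hp) (Nat.dvd_of_mem_primeFactors hp)

theorem ZMod.eq_zero_of_forall_castHom_eq_zero {n : ℕ} (hn : Squarefree n) (x : ZMod n)
    (h : ∀ (p : ℕ) (hp : p ∣ n), p.Prime → ZMod.castHom hp (ZMod p) x = 0) : x = 0 := by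
  have : NeZero n := ⟨hn.ne_zero⟩
  rw [← ZMod.natCast_zmod_val x, ZMod.natCast_eq_zero_iff]
  refine hn.dvd_of_forall_prime_dvd fun p hp hpn => ?_
  rw [← ZMod.natCast_eq_zero_iff, ← h p hpn hp, ← map_natCast (ZMod.castHom hpn (ZMod p)),
    ZMod.natCast_zmod_val]

/-- For a positive integer `n`, `x ^ (n + 1) = x` holds for every `x` in `ℤ/nℤ`
if and only if `n` is squarefree and `p - 1` divides `n` for every prime `p`
dividing `n`. -/
theorem zmod_pow_succ_eq_self_iff_squarefree (n : ℕ) (hn : 0 < n) :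
    (∀ x : ZMod n, x ^ (n + 1) = x) ↔
      Squarefree n ∧ ∀ p : ℕ, p.Prime → p ∣ n → (p - 1) ∣ n := by
  constructor
  · intro h
    refine ⟨?_, fun p hp hpn => ?_⟩
    · exact (isReduced_zmod.mp (isReduced_of_forall_pow_succ_eq_self hn h)).resolve_right hn.ne'
    · have : Fact p.Prime := ⟨hp⟩
      rw [← ZMod.forall_pow_succ_eq_self_iff]
      intro y
      obtain ⟨x, rfl⟩ := ZMod.ringHom_surjective (ZMod.castHom hpn (ZMod p)) y
      rw [← map_pow, h]
  · rintro ⟨hsf, hdvd⟩ x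
    rw [← sub_eq_zero]
    refine ZMod.eq_zero_of_forall_castHom_eq_zero hsf _ fun p hpn hp => ?_
    have : Fact p.Prime := ⟨hp⟩
    rw [map_sub, map_pow, sub_eq_zero, (ZMod.forall_pow_succ_eq_self_iff n).mpr (hdvd p hp hpn)]
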